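/- arXiv:math/0509666 — 4 statements merged into one kernel-verified Lean document; each statement's English description precedes it below -/
import Mathlib

section
/- For any C¹ function T : ℝ → ℝ with 0 ≤ T(x) ≤ 1 for all x, T(x) → 1 as x → −∞, and T(x) → 0 as x → +∞, one has (∫_{−∞}^{∞} (T′(x))² dx) · (∫_{−∞}^{∞} T(x)(1 − T(x)) dx) ≥ (π/8)² (where the inequality holds trivially if either integral is infinite). -/
open Real MeasureTheory Filter

/-! With `g u = √(u(1-u))` and `G` a primitive of `g`, `G 1 - G 0 = π/8` is the area of a half-disc
of radius `1/2`. As `(G ∘ T)' = g(T) T'`, the limits of `T` give `π/8 ≤ ∫ |T'| g(T)`, and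
Cauchy–Schwarz bounds the square of the right-hand side by `∫ T'² · ∫ g(T)² = ∫ T'² · ∫ T(1-T)`. -/

theorem integral_sqrt_mul_one_sub : ∫ t in (0 : ℝ)..1, √(t * (1 - t)) = π / 8 := by
  have key (t : ℝ) : √(t * (1 - t)) = √(1 - (2 * t - 1) ^ 2) / 2 := by
    rw [show 1 - (2 * t - 1) ^ 2 = 2 ^ 2 * (t * (1 - t)) by ring,
      sqrt_mul (by norm_num : (0 : ℝ) ≤ 2 ^ 2), sqrt_sq zero_le_two]
    ring
  simp_rw [key, intervalIntegral.integral_div,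
    intervalIntegral.integral_comp_mul_sub (fun x => √(1 - x ^ 2)) two_ne_zero 1]
  norm_num [integral_sqrt_one_sub_sq]
  ring

theorem enorm_sub_le_lintegral_enorm_of_hasDerivAt_of_tendsto {E : Type*}
    [NormedAddCommGroup E] [NormedSpace ℝ E] [CompleteSpace E] {f f' : ℝ → E} {m n : E}
    (hderiv : ∀ x, HasDerivAt f (f' x) x)
    (hbot : Tendsto f atBot (nhds m)) (htop : Tendsto f atTop (nhds n)) :
    ‖n - m‖ₑ ≤ ∫⁻ x, ‖f' x‖ₑ := by
  by_cases hfin : ∫⁻ x, ‖f' x‖ₑ = ⊤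
  · simp [hfin]
  have hmeas : AEStronglyMeasurable f' := by
    rw [show f' = deriv f from funext fun x => (hderiv x).deriv.symm]
    exact aestronglyMeasurable_deriv f _
  rw [← integral_of_hasDerivAt_of_tendsto hderiv ⟨hmeas, lt_top_iff_ne_top.2 hfin⟩ hbot htop]
  exact enorm_integral_le_lintegral_enorm f'

theorem sq_lintegral_mul_le_mul_lintegral_sq {α : Type*} [MeasurableSpace α] {μ : Measure α}
    {f g : α → ENNReal} (hf : AEMeasurable f μ) (hg : AEMeasurable g μ) :
    (∫⁻ a, f a * g a ∂μ) ^ 2 ≤ (∫⁻ a, f a ^ 2 ∂μ) * ∫⁻ a, g a ^ 2 ∂μ := by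
  have h := ENNReal.lintegral_mul_le_Lp_mul_Lq μ Real.HolderConjugate.two_two hf hg
  simp only [Pi.mul_apply, ENNReal.rpow_two] at h
  calc (∫⁻ a, f a * g a ∂μ) ^ 2
      ≤ ((∫⁻ a, f a ^ 2 ∂μ) ^ (1 / 2 : ℝ) * (∫⁻ a, g a ^ 2 ∂μ) ^ (1 / 2 : ℝ)) ^ 2 := by gcongr
    _ = (∫⁻ a, f a ^ 2 ∂μ) * ∫⁻ a, g a ^ 2 ∂μ := by
      rw [mul_pow, ← ENNReal.rpow_two, ← ENNReal.rpow_two, ← ENNReal.rpow_mul, ← ENNReal.rpow_mul]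
      norm_num

theorem enorm_sq_eq_ofReal_sq (y : ℝ) : ‖y‖ₑ ^ 2 = ENNReal.ofReal (y ^ 2) := by
  rw [← enorm_pow, Real.enorm_of_nonneg (sq_nonneg y)]

theorem ENNReal.ofReal_sqrt_sq (x : ℝ) : ENNReal.ofReal (√x ^ 2) = ENNReal.ofReal x := by
  rcases le_total 0 x with hx | hx
  · rw [sq_sqrt hx]
  · rw [sqrt_eq_zero'.2 hx, ENNReal.ofReal_of_nonpos hx]
    simp

theorem functional_inequality_general (T : ℝ → ℝ) (hT : ContDiff ℝ 1 T)
    (hbot : Tendsto T atBot (nhds 1)) (htop : Tendsto T atTop (nhds 0)) :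
    (∫⁻ x : ℝ, ENNReal.ofReal ((deriv T x) ^ 2)) *
      (∫⁻ x : ℝ, ENNReal.ofReal (T x * (1 - T x)))
      ≥ ENNReal.ofReal ((π / 8) ^ 2) := by
  set g : ℝ → ℝ := fun u => √(u * (1 - u))
  have hg : Continuous g := by fun_prop
  set G : ℝ → ℝ := fun u => ∫ t in (0 : ℝ)..u, g t
  have hG (u : ℝ) : HasDerivAt G (g u) u := (hg.integral_hasStrictDerivAt 0 u).hasDerivAt
  have hGc : Continuous G := continuous_iff_continuousAt.2 fun u => (hG u).continuousAt
  have hGT (x : ℝ) : HasDerivAt (G ∘ T) (g (T x) * deriv T x) x :=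
    (hG (T x)).comp x (hT.differentiable one_ne_zero x).hasDerivAt
  have hFTC := enorm_sub_le_lintegral_enorm_of_hasDerivAt_of_tendsto hGT
    ((hGc.tendsto 1).comp hbot) ((hGc.tendsto 0).comp htop)
  have hG01 : ‖G 0 - G 1‖ₑ = ENNReal.ofReal (π / 8) := by
    simp only [G, g, intervalIntegral.integral_same, integral_sqrt_mul_one_sub, zero_sub, enorm_neg]
    exact Real.enorm_of_nonneg (by positivity)
  calc ENNReal.ofReal ((π / 8) ^ 2) = ‖G 0 - G 1‖ₑ ^ 2 := by
        rw [hG01, ENNReal.ofReal_pow (by positivity)]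
    _ ≤ (∫⁻ x, ‖deriv T x‖ₑ * ‖g (T x)‖ₑ) ^ 2 := by
        simpa only [enorm_mul, mul_comm] using pow_le_pow_left' hFTC 2
    _ ≤ (∫⁻ x, ‖deriv T x‖ₑ ^ 2) * ∫⁻ x, ‖g (T x)‖ₑ ^ 2 :=
        sq_lintegral_mul_le_mul_lintegral_sq (hT.continuous_deriv le_rfl).enorm.aemeasurable
          (hg.comp hT.continuous).enorm.aemeasurable
    _ = _ := by simp only [enorm_sq_eq_ofReal_sq, g, ENNReal.ofReal_sqrt_sq]

/-- For any `C¹` function `T : ℝ → ℝ` with `0 ≤ T ≤ 1`, `T → 1` at `−∞` and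
`T → 0` at `+∞`, one has `(∫(T')²)(∫T(1−T)) ≥ (π/8)²` (as an inequality of
possibly infinite Lebesgue integrals of nonnegative functions). -/
theorem functional_inequality (T : ℝ → ℝ) (hT : ContDiff ℝ 1 T)
    (h0 : ∀ x, 0 ≤ T x) (h1 : ∀ x, T x ≤ 1)
    (hbot : Tendsto T atBot (nhds 1)) (htop : Tendsto T atTop (nhds 0)) :
    (∫⁻ x : ℝ, ENNReal.ofReal ((deriv T x) ^ 2)) *
      (∫⁻ x : ℝ, ENNReal.ofReal (T x * (1 - T x)))
      ≥ ENNReal.ofReal ((π / 8) ^ 2) :=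
  functional_inequality_general T hT hbot htop
end

section
/- The constant (π/8)² in the inequality (∫_ℝ (T′)² dx)(∫_ℝ T(1−T) dx) ≥ (π/8)² is sharp: the function T : ℝ → ℝ defined by T(x) = 1 for x ≤ −π/2, T(x) = (1 − sin x)/2 for −π/2 ≤ x ≤ π/2, and T(x) = 0 for x ≥ π/2, is C¹, satisfies 0 ≤ T ≤ 1, T(x) → 1 as x → −∞, T(x) → 0 as x → +∞, and achieves equality: (∫_{−∞}^{∞} (T′(x))² dx) · (∫_{−∞}^{∞} T(x)(1 − T(x)) dx) = (π/8)². -/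
open Real MeasureTheory Filter

/-- The extremal profile: `T(x) = 1` for `x ≤ −π/2`, `T(x) = (1 − sin x)/2`
for `−π/2 ≤ x ≤ π/2`, and `T(x) = 0` for `x ≥ π/2`. -/
noncomputable def extremalT (x : ℝ) : ℝ :=
  if x ≤ -(π / 2) then 1 else if x ≤ π / 2 then (1 - Real.sin x) / 2 else 0

/-- The (continuous) derivative of the extremal profile. -/
noncomputable def extremalD (x : ℝ) : ℝ :=
  -Real.cos (min (π / 2) (max (-(π / 2)) x)) / 2

lemma extremalT_eq_left {x : ℝ} (h : x ≤ -(π / 2)) : extremalT x = 1 := if_pos h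

lemma extremalT_eq_mid {x : ℝ} (h1 : -(π / 2) ≤ x) (h2 : x ≤ π / 2) :
    extremalT x = (1 - Real.sin x) / 2 := by
  by_cases h : x ≤ -(π / 2)
  · have hx : x = -(π / 2) := le_antisymm h h1
    subst hx
    simp [extremalT, Real.sin_neg, Real.sin_pi_div_two]
  · simp [extremalT, h, h2]

lemma extremalT_eq_right {x : ℝ} (h : π / 2 ≤ x) : extremalT x = 0 := by
  have hπ : (0:ℝ) < π / 2 := by positivity
  by_cases h1 : x ≤ -(π / 2)
  · linarith
  · by_cases h2 : x ≤ π / 2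
    · have hx : x = π / 2 := le_antisymm h2 h
      subst hx
      simp [extremalT, h1, Real.sin_pi_div_two]
    · simp [extremalT, h1, h2]

lemma extremalD_eq_mid {x : ℝ} (h1 : -(π / 2) ≤ x) (h2 : x ≤ π / 2) :
    extremalD x = -Real.cos x / 2 := by
  rw [extremalD, max_eq_right h1, min_eq_right h2]

lemma extremalD_eq_left {x : ℝ} (h : x ≤ -(π / 2)) : extremalD x = 0 := by
  have hπ : -(π / 2) ≤ (π / 2 : ℝ) := by nlinarith [Real.pi_pos]
  rw [extremalD, max_eq_left h, min_eq_right hπ, Real.cos_neg, Real.cos_pi_div_two]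
  norm_num

lemma extremalD_eq_right {x : ℝ} (h : π / 2 ≤ x) : extremalD x = 0 := by
  have hπ : -(π / 2) ≤ x := by nlinarith [Real.pi_pos]
  rw [extremalD, max_eq_right hπ, min_eq_left h, Real.cos_pi_div_two]
  norm_num

lemma hasDerivAt_mid (x : ℝ) :
    HasDerivAt (fun y => (1 - Real.sin y) / 2) (-Real.cos x / 2) x := by
  simpa using ((Real.hasDerivAt_sin x).const_sub 1).div_const 2

lemma hasDerivAt_extremalT (x : ℝ) : HasDerivAt extremalT (extremalD x) x := by
  have hπ : (0:ℝ) < π / 2 := by positivity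
  rcases lt_trichotomy x (-(π / 2)) with h | h | h
  · rw [extremalD_eq_left h.le]
    refine (hasDerivAt_const x (1:ℝ)).congr_of_eventuallyEq ?_
    filter_upwards [Iio_mem_nhds h] with y hy
    exact extremalT_eq_left (le_of_lt hy)
  · subst h
    rw [extremalD_eq_left le_rfl]
    have hleft : HasDerivWithinAt extremalT 0 (Set.Iic (-(π / 2))) (-(π / 2)) := by
      refine ((hasDerivAt_const _ (1:ℝ)).hasDerivWithinAt).congr
        (fun y hy => extremalT_eq_left hy) (extremalT_eq_left le_rfl)
    have hright : HasDerivWithinAt extremalT 0 (Set.Ici (-(π / 2))) (-(π / 2)) := by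
      have h0 : -Real.cos (-(π / 2)) / 2 = 0 := by
        rw [Real.cos_neg, Real.cos_pi_div_two]; norm_num
      have := (hasDerivAt_mid (-(π / 2))).hasDerivWithinAt (s := Set.Ici (-(π / 2)))
      rw [h0] at this
      refine this.congr_of_eventuallyEq ?_ (extremalT_eq_mid le_rfl (by linarith))
      filter_upwards [mem_nhdsWithin_of_mem_nhds (Iio_mem_nhds (by linarith : -(π/2) < π/2)),
        self_mem_nhdsWithin] with y hy1 hy2
      exact extremalT_eq_mid hy2 hy1.le
    have := hleft.union hright
    rw [Set.Iic_union_Ici] at this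
    exact this.hasDerivAt (by simp)
  · rcases lt_trichotomy x (π / 2) with h2 | h2 | h2
    · rw [extremalD_eq_mid h.le h2.le]
      refine (hasDerivAt_mid x).congr_of_eventuallyEq ?_
      filter_upwards [Ioo_mem_nhds h h2] with y hy
      exact extremalT_eq_mid hy.1.le hy.2.le
    · subst h2
      rw [extremalD_eq_right le_rfl]
      have h0 : -Real.cos (π / 2) / 2 = 0 := by
        rw [Real.cos_pi_div_two]; norm_num
      have hleft : HasDerivWithinAt extremalT 0 (Set.Iic (π / 2)) (π / 2) := by
        have := (hasDerivAt_mid (π / 2)).hasDerivWithinAt (s := Set.Iic (π / 2))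
        rw [h0] at this
        refine this.congr_of_eventuallyEq ?_ (extremalT_eq_mid (by linarith) le_rfl)
        filter_upwards [mem_nhdsWithin_of_mem_nhds (Ioi_mem_nhds (by linarith : -(π/2) < π/2)),
          self_mem_nhdsWithin] with y hy1 hy2
        exact extremalT_eq_mid hy1.le hy2
      have hright : HasDerivWithinAt extremalT 0 (Set.Ici (π / 2)) (π / 2) := by
        refine ((hasDerivAt_const _ (0:ℝ)).hasDerivWithinAt).congr
          (fun y hy => extremalT_eq_right hy) (extremalT_eq_right le_rfl)
      have := hleft.union hright
      rw [Set.Iic_union_Ici] at this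
      exact this.hasDerivAt (by simp)
    · rw [extremalD_eq_right h2.le]
      refine (hasDerivAt_const x (0:ℝ)).congr_of_eventuallyEq ?_
      filter_upwards [Ioi_mem_nhds h2] with y hy
      exact extremalT_eq_right (le_of_lt hy)

/-- The constant `(π/8)²` in the inequality
`(∫(T')²)(∫T(1−T)) ≥ (π/8)²` is sharp: the extremal profile is `C¹`,
takes values in `[0,1]`, is front-like, and achieves equality. -/
theorem sharp_constant :
    ContDiff ℝ 1 extremalT ∧
    (∀ x, 0 ≤ extremalT x ∧ extremalT x ≤ 1) ∧
    Tendsto extremalT atBot (nhds 1) ∧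
    Tendsto extremalT atTop (nhds 0) ∧
    (∫ x : ℝ, (deriv extremalT x) ^ 2) *
      (∫ x : ℝ, extremalT x * (1 - extremalT x)) = (π / 8) ^ 2 := by
  have hπ2 : -(π / 2) ≤ (π / 2 : ℝ) := by nlinarith [Real.pi_pos]
  have hderiv_eq : deriv extremalT = extremalD :=
    funext fun x => (hasDerivAt_extremalT x).deriv
  refine ⟨?_, ?_, ?_, ?_, ?_⟩
  · rw [contDiff_one_iff_deriv]
    refine ⟨fun x => (hasDerivAt_extremalT x).differentiableAt, ?_⟩
    rw [hderiv_eq]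
    unfold extremalD
    fun_prop
  · intro x
    rcases le_total x (-(π / 2)) with h | h
    · rw [extremalT_eq_left h]; norm_num
    · rcases le_total x (π / 2) with h2 | h2
      · rw [extremalT_eq_mid h h2]
        have := Real.neg_one_le_sin x
        have := Real.sin_le_one x
        constructor <;> linarith
      · rw [extremalT_eq_right h2]; norm_num
  · refine Tendsto.congr' ?_ tendsto_const_nhds
    filter_upwards [eventually_le_atBot (-(π / 2))] with y hy
    exact (extremalT_eq_left hy).symm
  · refine Tendsto.congr' ?_ tendsto_const_nhds
    filter_upwards [eventually_ge_atTop (π / 2)] with y hy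
    exact (extremalT_eq_right hy).symm
  · have key : ∀ f : ℝ → ℝ,
        (∀ x ∈ Set.Icc (-(π / 2)) (π / 2), f x = Real.cos x ^ 2 / 4) →
        (∀ x ∉ Set.Icc (-(π / 2)) (π / 2), f x = 0) → (∫ x, f x) = π / 8 := by
      intro f hin hout
      rw [← setIntegral_eq_integral_of_forall_compl_eq_zero hout,
        setIntegral_congr_fun measurableSet_Icc hin,
        integral_Icc_eq_integral_Ioc, ← intervalIntegral.integral_of_le hπ2,
        intervalIntegral.integral_div, integral_cos_sq,
        Real.sin_pi_div_two, Real.cos_pi_div_two, Real.sin_neg, Real.cos_neg,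
        Real.sin_pi_div_two, Real.cos_pi_div_two]
      ring
    have h1 : (∫ x : ℝ, extremalD x ^ 2) = π / 8 := by
      refine key _ (fun x hx => ?_) (fun x hx => ?_)
      · rw [extremalD_eq_mid hx.1 hx.2]; ring
      · simp only [Set.mem_Icc, not_and_or, not_le] at hx
        rcases hx with h | h
        · rw [extremalD_eq_left h.le]; ring
        · rw [extremalD_eq_right h.le]; ring
    have h2 : (∫ x : ℝ, extremalT x * (1 - extremalT x)) = π / 8 := by
      refine key _ (fun x hx => ?_) (fun x hx => ?_)
      · rw [extremalT_eq_mid hx.1 hx.2, Real.cos_sq']; ring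
      · simp only [Set.mem_Icc, not_and_or, not_le] at hx
        rcases hx with h | h
        · rw [extremalT_eq_left h.le]; ring
        · rw [extremalT_eq_right h.le]; ring
    rw [hderiv_eq, h1, h2]
    ring
end

section
/- For all real numbers a, b with 0 ≤ a ≤ 1 and 0 ≤ b ≤ 1: |a − b| ≤ 3 [ (a − b)² + a(1 − a) + b(1 − b) ]. -/
/-- For all `a, b ∈ [0,1]`: `|a − b| ≤ 3[(a − b)² + a(1 − a) + b(1 − b)]`. -/
theorem abs_sub_le_three_mul (a b : ℝ) (ha0 : 0 ≤ a) (ha1 : a ≤ 1)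
    (hb0 : 0 ≤ b) (hb1 : b ≤ 1) :
    |a - b| ≤ 3 * ((a - b) ^ 2 + a * (1 - a) + b * (1 - b)) := by
  rcases abs_cases (a - b) with ⟨h, _⟩ | ⟨h, _⟩ <;> rw [h] <;>
    nlinarith [sq_nonneg (a - b), sq_nonneg (a + b - 1), mul_nonneg ha0 hb0,
      mul_nonneg (sub_nonneg.2 ha1) (sub_nonneg.2 hb1)]
end

section
/- Let T₁, T₂ : ℝ → ℝ be measurable functions with 0 ≤ T₁(x) ≤ 1 and 0 ≤ T₂(x) ≤ 1 for all x, such that T₁ − T₂ ∈ L¹(ℝ) ∩ L²(ℝ) and T₁(1 − T₁), T₂(1 − T₂) ∈ L¹(ℝ). Then ∫_ℝ |T₁(x) − T₂(x)| dx ≤ 3 [ ∫_ℝ (T₁(x) − T₂(x))² dx + ∫_ℝ ( T₁(x)(1 − T₁(x)) + T₂(x)(1 − T₂(x)) ) dx ]. -/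
/-!
Pointwise, for `a, b ∈ [0,1]`,
`(a - b)² + a(1 - a) + b(1 - b) - |a - b| = 2 min(a,b) (1 - max(a,b)) ≥ 0`,
so `|T₁ - T₂|` is dominated by the integrand on the right even with constant `1`.
-/

open MeasureTheory

theorem abs_sub_le_sq_add_mul_one_sub {a b : ℝ} (ha₀ : 0 ≤ a) (ha₁ : a ≤ 1)
    (hb₀ : 0 ≤ b) (hb₁ : b ≤ 1) :
    |a - b| ≤ (a - b) ^ 2 + (a * (1 - a) + b * (1 - b)) := by
  rcases le_total b a with hba | hab
  · rw [abs_of_nonneg (sub_nonneg.mpr hba)]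
    nlinarith [mul_nonneg hb₀ (sub_nonneg.mpr ha₁)]
  · rw [abs_of_nonpos (sub_nonpos.mpr hab)]
    nlinarith [mul_nonneg ha₀ (sub_nonneg.mpr hb₁)]

theorem integral_abs_sub_le_integral_sq_add {α : Type*} [MeasurableSpace α] {μ : Measure α}
    {f g : α → ℝ} (hf₀ : ∀ x, 0 ≤ f x) (hf₁ : ∀ x, f x ≤ 1)
    (hg₀ : ∀ x, 0 ≤ g x) (hg₁ : ∀ x, g x ≤ 1)
    (hsq : Integrable (fun x => (f x - g x) ^ 2) μ)
    (hrf : Integrable (fun x => f x * (1 - f x)) μ)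
    (hrg : Integrable (fun x => g x * (1 - g x)) μ) :
    ∫ x, |f x - g x| ∂μ ≤
      (∫ x, (f x - g x) ^ 2 ∂μ) + ∫ x, (f x * (1 - f x) + g x * (1 - g x)) ∂μ := by
  have hr : Integrable (fun x => f x * (1 - f x) + g x * (1 - g x)) μ := hrf.add hrg
  rw [← integral_add hsq hr]
  exact integral_mono_of_nonneg (ae_of_all _ fun x => abs_nonneg _) (hsq.add hr)
    (ae_of_all _ fun x => abs_sub_le_sq_add_mul_one_sub (hf₀ x) (hf₁ x) (hg₀ x) (hg₁ x))

theorem L1_dist_le_L2_plus_reaction_general (T₁ T₂ : ℝ → ℝ)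
    (h₁0 : ∀ x, 0 ≤ T₁ x) (h₁1 : ∀ x, T₁ x ≤ 1)
    (h₂0 : ∀ x, 0 ≤ T₂ x) (h₂1 : ∀ x, T₂ x ≤ 1)
    (hL2 : MemLp (fun x => T₁ x - T₂ x) 2)
    (hr₁ : Integrable (fun x => T₁ x * (1 - T₁ x)))
    (hr₂ : Integrable (fun x => T₂ x * (1 - T₂ x))) :
    ∫ x : ℝ, |T₁ x - T₂ x| ≤
      3 * ((∫ x : ℝ, (T₁ x - T₂ x) ^ 2) +
        ∫ x : ℝ, (T₁ x * (1 - T₁ x) + T₂ x * (1 - T₂ x))) := by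
  have hsq : Integrable (fun x => (T₁ x - T₂ x) ^ 2) := by
    simpa only [sq] using hL2.integrable_sq
  have hrhs_nonneg : 0 ≤ (∫ x : ℝ, (T₁ x - T₂ x) ^ 2) +
      ∫ x : ℝ, (T₁ x * (1 - T₁ x) + T₂ x * (1 - T₂ x)) :=
    add_nonneg (integral_nonneg fun x => sq_nonneg _) (integral_nonneg fun x =>
      add_nonneg (mul_nonneg (h₁0 x) (sub_nonneg.mpr (h₁1 x)))
        (mul_nonneg (h₂0 x) (sub_nonneg.mpr (h₂1 x))))
  have := integral_abs_sub_le_integral_sq_add h₁0 h₁1 h₂0 h₂1 hsq hr₁ hr₂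
  linarith

/-- For measurable `T₁, T₂ : ℝ → ℝ` with values in `[0,1]`, with
`T₁ − T₂ ∈ L¹ ∩ L²` and `T₁(1−T₁), T₂(1−T₂) ∈ L¹`:
`∫|T₁ − T₂| ≤ 3[∫(T₁ − T₂)² + ∫(T₁(1−T₁) + T₂(1−T₂))]`. -/
theorem L1_dist_le_L2_plus_reaction (T₁ T₂ : ℝ → ℝ)
    (hm₁ : Measurable T₁) (hm₂ : Measurable T₂)
    (h₁0 : ∀ x, 0 ≤ T₁ x) (h₁1 : ∀ x, T₁ x ≤ 1)
    (h₂0 : ∀ x, 0 ≤ T₂ x) (h₂1 : ∀ x, T₂ x ≤ 1)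
    (hL1 : Integrable (fun x => T₁ x - T₂ x))
    (hL2 : MemLp (fun x => T₁ x - T₂ x) 2)
    (hr₁ : Integrable (fun x => T₁ x * (1 - T₁ x)))
    (hr₂ : Integrable (fun x => T₂ x * (1 - T₂ x))) :
    ∫ x : ℝ, |T₁ x - T₂ x| ≤
      3 * ((∫ x : ℝ, (T₁ x - T₂ x) ^ 2) +
        ∫ x : ℝ, (T₁ x * (1 - T₁ x) + T₂ x * (1 - T₂ x))) :=
  L1_dist_le_L2_plus_reaction_general T₁ T₂ h₁0 h₁1 h₂0 h₂1 hL2 hr₁ hr₂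
end
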